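/- arXiv:2602.11417 — 2 statements merged into one kernel-verified Lean document; each statement's English description precedes it below -/
import Mathlib

section
/- Upward moves are harmful when lower agents are fixed: let X and X' be nonnegative collection profiles and i an agent with X' i > X i, such that X' j = X j for every agent j ≠ i with X j ≤ X i. Suppose d ≥ 0 is the right derivative of b_i at t_i(X) (i.e., b_i has derivative d within [t_i(X), ∞) at t_i(X)) and that k_i^↑(X) · d < c_i. Then U_i(X') < U_i(X). -/
open Finset

/-- Agent `i`'s total accessible data under fair exchange. -/
noncomputable def total {n : ℕ} (X : Fin n → ℝ) (i : Fin n) : ℝ :=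
  X i + ∑ j ∈ univ.filter (fun j => j ≠ i), min (X i) (X j)

/-- `k_i^↑(X)`: the number of agents strictly above `i`, plus `i` itself. -/
noncomputable def kUp {n : ℕ} (X : Fin n → ℝ) (i : Fin n) : ℕ :=
  1 + (univ.filter (fun j => j ≠ i ∧ X i < X j)).card

lemma total_nonneg {n : ℕ} (X : Fin n → ℝ) (hX : ∀ j, 0 ≤ X j) (i : Fin n) :
    0 ≤ total X i := by
  unfold total
  have : 0 ≤ ∑ j ∈ univ.filter (fun j => j ≠ i), min (X i) (X j) :=
    Finset.sum_nonneg fun j _ => le_min (hX i) (hX j)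
  linarith [hX i]

/-- Upward moves are harmful when lower agents are fixed: if agent `i` strictly raises its
collection while all agents weakly below `i` keep theirs, and `i` strictly does not want to
deviate upward locally (`k_i^↑(X) · b_i'(t_i(X)) < c_i`, with `b_i'` the right derivative),
then `i` is strictly worse off. -/
theorem upward_move_harmful (n : ℕ) (X X' : Fin n → ℝ)
    (hX : ∀ j, 0 ≤ X j) (hX' : ∀ j, 0 ≤ X' j)
    (b : ℝ → ℝ) (c : ℝ) (hc : 0 < c)
    (hbc : ContinuousOn b (Set.Ici 0))
    (hbm : MonotoneOn b (Set.Ici 0))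
    (hbconc : ConcaveOn ℝ (Set.Ici 0) b)
    (i : Fin n) (hi : X i < X' i)
    (hfix : ∀ j, j ≠ i → X j ≤ X i → X' j = X j)
    (d : ℝ) (hd0 : 0 ≤ d)
    (hderiv : HasDerivWithinAt b d (Set.Ici (total X i)) (total X i))
    (hstrict : (kUp X i : ℝ) * d < c) :
    b (total X' i) - c * X' i < b (total X i) - c * X i := by
  set t := total X i with ht
  set t' := total X' i with ht'
  have htnn : 0 ≤ t := total_nonneg X hX i
  have ht'nn : 0 ≤ t' := total_nonneg X' hX' i
  have hΔ : 0 < X' i - X i := by linarith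
  -- key bound on the increase of the total
  have hkey : t' - t ≤ (kUp X i : ℝ) * (X' i - X i) := by
    have hsum : ∑ j ∈ univ.filter (fun j => j ≠ i), min (X' i) (X' j)
        - ∑ j ∈ univ.filter (fun j => j ≠ i), min (X i) (X j)
        ≤ ∑ j ∈ univ.filter (fun j => j ≠ i),
            (if X i < X j then X' i - X i else 0) := by
      rw [← Finset.sum_sub_distrib]
      apply Finset.sum_le_sum
      intro j hj
      simp only [Finset.mem_filter] at hj
      by_cases h : X i < X j
      · simp only [h, if_true]
        have h1 : min (X i) (X j) = X i := min_eq_left h.le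
        have h2 : min (X' i) (X' j) ≤ X' i := min_le_left _ _
        linarith
      · push_neg at h
        have hXj : X' j = X j := hfix j hj.2 h
        simp only [if_neg (not_lt.mpr h)]
        rw [hXj, min_eq_right h, min_eq_right (h.trans hi.le)]
        simp
    have hcard : ∑ j ∈ univ.filter (fun j => j ≠ i),
        (if X i < X j then X' i - X i else 0)
        = ((univ.filter (fun j => j ≠ i ∧ X i < X j)).card : ℝ) * (X' i - X i) := by
      rw [Finset.sum_ite, Finset.sum_const_zero, add_zero, Finset.sum_const,
        Finset.filter_filter, nsmul_eq_mul]
    have hk : ((kUp X i : ℕ) : ℝ)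
        = 1 + ((univ.filter (fun j => j ≠ i ∧ X i < X j)).card : ℝ) := by
      simp [kUp]
    rw [ht, ht', total, total, hk]
    rw [hcard] at hsum
    ring_nf
    ring_nf at hsum
    linarith
  rcases le_or_gt t' t with hle | hlt
  · -- total didn't increase: use monotonicity
    have hb : b t' ≤ b t := hbm ht'nn htnn hle
    nlinarith
  · -- total increased: use the right-derivative slope bound
    have hslope : slope b t t' ≤ d := by
      apply hbconc.slope_le_of_hasDerivWithinAt_Ioi htnn ht'nn hlt
      exact hderiv.mono Set.Ioi_subset_Ici_self
    rw [slope_def_field, div_le_iff₀ (by linarith)] at hslope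
    have h1 : b t' - b t ≤ d * ((kUp X i : ℝ) * (X' i - X i)) := by
      have := mul_le_mul_of_nonneg_left hkey hd0
      nlinarith
    nlinarith
end

section
/- Downward moves are weakly harmful when low agents are fixed: let X and X' be nonnegative collection profiles and i an agent with X' i < X i, such that X' j = X j for every agent j ≠ i with X j < X' i. Suppose d ≥ 0 is the right derivative of b_i at t_i(X) (i.e., b_i has derivative d within [t_i(X), ∞) at t_i(X)) and that k_i(X) · d ≥ c_i, where k_i(X) = #{j : X j ≥ X i}. Then U_i(X') ≤ U_i(X). -/
open Finset

/-- `k_i(X)`: the number of agents weakly above `i`, including `i` itself. -/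
noncomputable def kWeak {n : ℕ} (X : Fin n → ℝ) (i : Fin n) : ℕ :=
  (univ.filter (fun j => X i ≤ X j)).card

/-- `total` as a full sum over all agents. -/
lemma total_eq_sum {n : ℕ} (X : Fin n → ℝ) (i : Fin n) :
    total X i = ∑ j ∈ univ, min (X i) (X j) := by
  unfold total
  rw [Finset.filter_ne' univ i]
  rw [← Finset.add_sum_erase univ (fun j => min (X i) (X j)) (Finset.mem_univ i)]
  rw [min_self]

/-- Downward moves are weakly harmful when low agents are fixed: if agent `i` strictly
lowers its collection while all agents strictly below the new level keep theirs, and `i`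
weakly does not want to deviate downward locally (`k_i(X) · b_i'(t_i(X)) ≥ c_i`, with
`b_i'` the right derivative), then `i` is weakly worse off. -/
theorem downward_move_weakly_harmful (n : ℕ) (X X' : Fin n → ℝ)
    (hX : ∀ j, 0 ≤ X j) (hX' : ∀ j, 0 ≤ X' j)
    (b : ℝ → ℝ) (c : ℝ) (hc : 0 < c)
    (hbc : ContinuousOn b (Set.Ici 0))
    (hbm : MonotoneOn b (Set.Ici 0))
    (hbconc : ConcaveOn ℝ (Set.Ici 0) b)
    (i : Fin n) (hi : X' i < X i)
    (hfix : ∀ j, j ≠ i → X j < X' i → X' j = X j)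
    (d : ℝ) (hd0 : 0 ≤ d)
    (hderiv : HasDerivWithinAt b d (Set.Ici (total X i)) (total X i))
    (hweak : c ≤ (kWeak X i : ℝ) * d) :
    b (total X' i) - c * X' i ≤ b (total X i) - c * X i := by
  set t := total X i with ht
  set t' := total X' i with ht'
  set Δ : ℝ := X i - X' i with hΔ
  have hΔpos : 0 < Δ := by simp [hΔ]; linarith
  -- step 1 : t' + kΔ ≤ t
  have hk : (kWeak X i : ℝ) * Δ = ∑ j ∈ univ, (if X i ≤ X j then Δ else (0:ℝ)) := by
    rw [← Finset.sum_filter, Finset.sum_const, nsmul_eq_mul]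
    rfl
  have hstep1 : t' + (kWeak X i : ℝ) * Δ ≤ t := by
    rw [ht, ht', total_eq_sum, total_eq_sum, hk, ← Finset.sum_add_distrib]
    apply Finset.sum_le_sum
    intro j _
    by_cases hji : j = i
    · subst hji
      simp [hi.le, hΔ]
    · by_cases hij : X i ≤ X j
      · simp only [hij, if_true]
        have h1 : min (X' i) (X' j) ≤ X' i := min_le_left _ _
        have h2 : min (X i) (X j) = X i := min_eq_left hij
        rw [h2]; simp [hΔ]; linarith
      · simp only [hij, if_false, add_zero]
        push_neg at hij
        by_cases hlow : X j < X' i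
        · rw [hfix j hji hlow]
          have : min (X' i) (X j) = X j := min_eq_right hlow.le
          have : min (X i) (X j) = X j := min_eq_right hij.le
          simp [min_eq_right hlow.le, min_eq_right hij.le]
        · push_neg at hlow
          calc min (X' i) (X' j) ≤ X' i := min_le_left _ _
            _ ≤ X j := hlow
            _ = min (X i) (X j) := (min_eq_right hij.le).symm
  have hkpos : (1:ℝ) ≤ (kWeak X i : ℝ) := by
    have : 0 < kWeak X i := Finset.card_pos.2 ⟨i, by simp [kWeak]⟩
    exact_mod_cast this
  have hkd : Δ ≤ (kWeak X i : ℝ) * Δ := le_mul_of_one_le_left hΔpos.le hkpos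
  have ht'nonneg : 0 ≤ t' := by
    rw [ht', total_eq_sum]
    apply Finset.sum_nonneg
    intro j _
    exact le_min (hX' i) (hX' j)
  have htt' : t' < t := by linarith
  have htnonneg : 0 ≤ t := le_trans ht'nonneg htt'.le
  -- step 2: d * (t - t') ≤ b t - b t'
  have hslope : d ≤ (b t - b t') / (t - t') := by
    rw [hasDerivWithinAt_iff_tendsto_slope] at hderiv
    have hset : Set.Ici t \ {t} = Set.Ioi t := Set.Ici_sdiff_left
    rw [hset] at hderiv
    refine le_of_tendsto hderiv ?_
    filter_upwards [self_mem_nhdsWithin] with u hu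
    have hu' : t < u := hu
    have := hbconc.slope_anti_adjacent (x := t') (y := t) (z := u)
      ht'nonneg (le_trans htnonneg hu'.le) htt' hu'
    rw [slope_def_field]
    exact this
  have hstep2 : d * (t - t') ≤ b t - b t' := by
    rw [le_div_iff₀ (by linarith : (0:ℝ) < t - t')] at hslope
    linarith
  -- combine
  have hfinal : c * Δ ≤ b t - b t' := by
    calc c * Δ ≤ (kWeak X i : ℝ) * d * Δ := by
          apply mul_le_mul_of_nonneg_right hweak hΔpos.le
      _ = d * ((kWeak X i : ℝ) * Δ) := by ring
      _ ≤ d * (t - t') := by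
          apply mul_le_mul_of_nonneg_left (by linarith) hd0
      _ ≤ b t - b t' := hstep2
  simp only [hΔ] at hfinal
  linarith
end
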